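/- Fix constants K > 0, C₀ > 0, A > 0, γ ≥ 0, an integer d ≥ 2, and exponents α > (d−1)/2 and 0 ≤ β < (d−1)/2. There exist constants c, c' > 0 such that for every sufficiently large prime power q the following holds: suppose S ⊆ F_q^d satisfies |Ŝ(m)| ≤ A q^{−(d+1)/2} (log q)^{γ} for all nonzero m and | |S| − K q^{d−1} | ≤ C₀ q^{d−1−α}. If E ⊆ F_q^d with |E| ≥ c q^{(d+1)/2} (log q)^{γ}, then for every real M with 0 < M ≤ q^{β}, the set E_M = {x ∈ E : #{y ∈ E : x − y ∈ S} > M} satisfies |E_M| ≥ c' |E|. -/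

import Mathlib

open scoped BigOperators Pointwise

/-- Fourier transform of (the indicator of) a finite set `S ⊆ F_q^d`:
`Ŝ(m) = q^{-d} ∑_{x ∈ S} χ(-m·x)`. -/
noncomputable def ftr {F : Type} [Field F] [Fintype F] {d : ℕ} (χ : AddChar F ℂ)
    (S : Finset (Fin d → F)) (m : Fin d → F) : ℂ :=
  ((Fintype.card F : ℂ) ^ d)⁻¹ * ∑ x ∈ S, χ (-(∑ i, m i * x i))

/-- `S` is a `γ`-Salem set: `|Ŝ(m)| ≤ q^{-d} (log q)^γ |S|^{1/2}` for all `m ≠ 0`. -/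
def IsSalemSet {F : Type} [Field F] [Fintype F] {d : ℕ}
    (χ : AddChar F ℂ) (γ : ℝ) (S : Finset (Fin d → F)) : Prop :=
  ∀ m : Fin d → F, m ≠ 0 →
    ‖ftr χ S m‖ ≤
      ((Fintype.card F : ℝ) ^ d)⁻¹ * Real.log (Fintype.card F) ^ γ *
        (S.card : ℝ) ^ ((1 : ℝ) / 2)

/-- `C ⊆ E` is shattered by the hypothesis class `H_S(E) = {h_y : y ∈ E}`,
`h_y(x) = 1 ↔ x - y ∈ S`. -/
def Shatters {V : Type} [Sub V] (E S C : Finset V) : Prop :=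
  C ⊆ E ∧ ∀ I ⊆ C, ∃ y ∈ E, ∀ x ∈ C, (x - y ∈ S ↔ x ∈ I)

/-- VC-dimension of the hypothesis class `H_S(E)`: the largest size of a shattered
subset of `E`. -/
noncomputable def vcDim {V : Type} [Sub V] (E S : Finset V) : ℕ :=
  sSup {n | ∃ C : Finset V, C.card = n ∧ Shatters E S C}

/-! Let `E'` be the points of `E` with at most `M` neighbours and suppose `|E'| ≥ |E| / 2`.
Counting the pairs of `E'` whose difference lies in `S` by Fourier inversion, the zero frequency
contributes `|S| |E'|² / q^d ≈ K |E'|² / q`, while the decay of `Ŝ` together with Plancherel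
bounds the other frequencies by `A q^((d-1)/2) (log q)^γ |E'|`. The count is also at most
`M |E'| ≤ q^β |E'|`, and once `|E| ≥ c q^((d+1)/2) (log q)^γ` with `c = 4 (A + 1) / K` these
force `q^((d-1)/2) ≤ q^β`, contradicting `β < (d-1)/2`. -/

open Finset

theorem AddChar.map_sum_eq_prod {A M ι : Type*} [AddCommMonoid A] [CommMonoid M]
    (ψ : AddChar A M) (s : Finset ι) (f : ι → A) :
    ψ (∑ i ∈ s, f i) = ∏ i ∈ s, ψ (f i) :=
  map_prod ψ.toMonoidHom (fun i => Multiplicative.ofAdd (f i)) s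

section Fourier

variable {F : Type} [Field F] [Fintype F] {d : ℕ} {χ : AddChar F ℂ}

theorem sum_addChar_dotProduct [DecidableEq F] (hχ : χ ≠ 1) (v : Fin d → F) :
    ∑ m : Fin d → F, χ (m ⬝ᵥ v) = if v = 0 then (Fintype.card F : ℂ) ^ d else 0 := by
  have hprim : χ.IsPrimitive := AddChar.IsPrimitive.of_ne_one hχ
  calc ∑ m : Fin d → F, χ (m ⬝ᵥ v)
      = ∏ i, ∑ t : F, χ (t * v i) := by
        simp only [dotProduct, χ.map_sum_eq_prod, Fintype.prod_sum]
    _ = ∏ i, if v i = 0 then (Fintype.card F : ℂ) else 0 := by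
        simp only [AddChar.sum_mulShift _ hprim]
        push_cast; rfl
    _ = if v = 0 then (Fintype.card F : ℂ) ^ d else 0 := by
        split_ifs with hv
        · simp [hv]
        · obtain ⟨i, hi⟩ := Function.ne_iff.mp hv
          exact prod_eq_zero (mem_univ i) (if_neg hi)

theorem ftr_eq_dotProduct (S : Finset (Fin d → F)) (m : Fin d → F) :
    ftr χ S m = ((Fintype.card F : ℂ) ^ d)⁻¹ * ∑ x ∈ S, χ (-(m ⬝ᵥ x)) := rfl

theorem ftr_zero (S : Finset (Fin d → F)) :
    ftr χ S 0 = ((Fintype.card F : ℂ) ^ d)⁻¹ * S.card := by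
  simp [ftr_eq_dotProduct]

theorem conj_ftr (S : Finset (Fin d → F)) (m : Fin d → F) :
    starRingEnd ℂ (ftr χ S m) = ((Fintype.card F : ℂ) ^ d)⁻¹ * ∑ x ∈ S, χ (m ⬝ᵥ x) := by
  simp [ftr_eq_dotProduct, AddChar.map_neg_eq_conj]

variable [DecidableEq F]

theorem sum_ftr_mul_norm_sq_ftr (hχ : χ ≠ 1) (S E : Finset (Fin d → F)) :
    ((Fintype.card F : ℂ) ^ d) ^ 2 * ∑ m, ftr χ S m * (‖ftr χ E m‖ : ℂ) ^ 2
      = ∑ x ∈ E, (#(E.filter fun y => x - y ∈ S) : ℂ) := by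
  have hq : (Fintype.card F : ℂ) ^ d ≠ 0 :=
    pow_ne_zero _ (Nat.cast_ne_zero.mpr Fintype.card_ne_zero)
  have hterm (m : Fin d → F) : ftr χ S m * (‖ftr χ E m‖ : ℂ) ^ 2
      = ((Fintype.card F : ℂ) ^ d)⁻¹ ^ 3 * ∑ x ∈ E, ∑ y ∈ E, ∑ s ∈ S, χ (m ⬝ᵥ (x - y - s)) := by
    have hchar (x y s : Fin d → F) :
        χ (m ⬝ᵥ (x - y - s)) = χ (m ⬝ᵥ x) * χ (-(m ⬝ᵥ y)) * χ (-(m ⬝ᵥ s)) := by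
      rw [← AddChar.map_add_eq_mul, ← AddChar.map_add_eq_mul, dotProduct_sub, dotProduct_sub]
      ring_nf
    simp only [hchar, ← sum_mul, ← mul_sum]
    rw [← Complex.conj_mul', conj_ftr, ftr_eq_dotProduct, ftr_eq_dotProduct]
    ring
  calc ((Fintype.card F : ℂ) ^ d) ^ 2 * ∑ m, ftr χ S m * (‖ftr χ E m‖ : ℂ) ^ 2
      = ((Fintype.card F : ℂ) ^ d)⁻¹ *
          ∑ x ∈ E, ∑ y ∈ E, ∑ s ∈ S, ∑ m : Fin d → F, χ (m ⬝ᵥ (x - y - s)) := by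
        have hswap : ∑ m : Fin d → F, ∑ x ∈ E, ∑ y ∈ E, ∑ s ∈ S, χ (m ⬝ᵥ (x - y - s))
            = ∑ x ∈ E, ∑ y ∈ E, ∑ s ∈ S, ∑ m : Fin d → F, χ (m ⬝ᵥ (x - y - s)) := by
          rw [sum_comm]
          refine sum_congr rfl fun x _ => ?_
          rw [sum_comm]
          exact sum_congr rfl fun y _ => sum_comm
        simp only [hterm, ← mul_sum, ← hswap]
        field_simp
    _ = ∑ x ∈ E, (#(E.filter fun y => x - y ∈ S) : ℂ) := by
        simp only [sum_addChar_dotProduct hχ, sub_eq_zero, sum_ite_eq, mul_sum, mul_ite,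
          mul_zero, inv_mul_cancel₀ hq, sum_boole]

theorem sum_norm_sq_ftr (hχ : χ ≠ 1) (E : Finset (Fin d → F)) :
    ∑ m, ‖ftr χ E m‖ ^ 2 = E.card / (Fintype.card F : ℝ) ^ d := by
  have hq : (Fintype.card F : ℂ) ^ d ≠ 0 :=
    pow_ne_zero _ (Nat.cast_ne_zero.mpr Fintype.card_ne_zero)
  have h := sum_ftr_mul_norm_sq_ftr hχ {0} E
  have hftr (m : Fin d → F) : ftr χ {0} m = ((Fintype.card F : ℂ) ^ d)⁻¹ := by
    simp [ftr_eq_dotProduct]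
  have hcard : ∀ x ∈ E, (#(E.filter fun y => x - y ∈ ({0} : Finset (Fin d → F))) : ℂ) = 1 := by
    intro x hx
    simp [sub_eq_zero, filter_eq, hx]
  rw [sum_congr rfl hcard, sum_const, nsmul_one] at h
  simp only [hftr, ← mul_sum] at h
  apply Complex.ofReal_injective
  push_cast
  rw [← h]
  field_simp

theorem card_mul_sq_div_sub_le_sum_card_filter (hχ : χ ≠ 1) {S : Finset (Fin d → F)} {B : ℝ}
    (hB : 0 ≤ B) (hS : ∀ m, m ≠ 0 → ‖ftr χ S m‖ ≤ B) (E : Finset (Fin d → F)) :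
    S.card * (E.card : ℝ) ^ 2 / (Fintype.card F : ℝ) ^ d - B * (Fintype.card F : ℝ) ^ d * E.card
      ≤ ∑ x ∈ E, (#(E.filter fun y => x - y ∈ S) : ℝ) := by
  have hcount := sum_ftr_mul_norm_sq_ftr hχ S E
  rw [← add_sum_erase _ _ (mem_univ 0), ftr_zero, ftr_zero] at hcount
  set R : ℂ := ∑ m ∈ univ.erase 0, ftr χ S m * (‖ftr χ E m‖ : ℂ) ^ 2
  have hq : (0 : ℝ) < (Fintype.card F : ℝ) ^ d := by positivity
  have hR : ‖R‖ ≤ B * (E.card / (Fintype.card F : ℝ) ^ d) :=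
    calc ‖R‖ ≤ ∑ m ∈ univ.erase 0, ‖ftr χ S m‖ * ‖ftr χ E m‖ ^ 2 := by
          refine (norm_sum_le _ _).trans_eq (sum_congr rfl fun m _ => ?_)
          simp
      _ ≤ ∑ m ∈ univ.erase 0, B * ‖ftr χ E m‖ ^ 2 :=
          sum_le_sum fun m hm => by gcongr; exact hS m (ne_of_mem_erase hm)
      _ ≤ ∑ m, B * ‖ftr χ E m‖ ^ 2 :=
          sum_le_sum_of_subset_of_nonneg (erase_subset _ _) fun _ _ _ => by positivity
      _ = B * (E.card / (Fintype.card F : ℝ) ^ d) := by rw [← mul_sum, sum_norm_sq_ftr hχ]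
  have hdiff : ((∑ x ∈ E, (#(E.filter fun y => x - y ∈ S) : ℝ)
      - S.card * (E.card : ℝ) ^ 2 / (Fintype.card F : ℝ) ^ d : ℝ) : ℂ)
      = (((Fintype.card F : ℝ) ^ d) ^ 2 : ℝ) * R := by
    push_cast
    rw [← hcount, norm_mul, norm_inv, norm_pow, Complex.norm_natCast, Complex.norm_natCast]
    push_cast
    field_simp
    ring
  have habs := congrArg norm hdiff
  rw [Complex.norm_real, Real.norm_eq_abs, norm_mul, Complex.norm_real,
    Real.norm_of_nonneg (by positivity)] at habs
  have herror : ((Fintype.card F : ℝ) ^ d) ^ 2 * ‖R‖ ≤ B * (Fintype.card F : ℝ) ^ d * E.card :=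
    calc ((Fintype.card F : ℝ) ^ d) ^ 2 * ‖R‖
        ≤ ((Fintype.card F : ℝ) ^ d) ^ 2 * (B * (E.card / (Fintype.card F : ℝ) ^ d)) := by
          gcongr
      _ = B * (Fintype.card F : ℝ) ^ d * E.card := by field_simp
  linarith [neg_abs_le (∑ x ∈ E, (#(E.filter fun y => x - y ∈ S) : ℝ)
      - S.card * (E.card : ℝ) ^ 2 / (Fintype.card F : ℝ) ^ d)]

theorem card_mul_card_div_le_of_forall_card_filter_le (hχ : χ ≠ 1)
    {S E : Finset (Fin d → F)} {B M : ℝ} (hB : 0 ≤ B) (hS : ∀ m, m ≠ 0 → ‖ftr χ S m‖ ≤ B)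
    (hM : 0 ≤ M) (hE : ∀ x ∈ E, (#(E.filter fun y => x - y ∈ S) : ℝ) ≤ M) :
    S.card * E.card / (Fintype.card F : ℝ) ^ d ≤ M + B * (Fintype.card F : ℝ) ^ d := by
  rcases E.eq_empty_or_nonempty with rfl | hne
  · simp only [card_empty, Nat.cast_zero, mul_zero, zero_div]
    positivity
  have hcount : ∑ x ∈ E, (#(E.filter fun y => x - y ∈ S) : ℝ) ≤ M * E.card :=
    (sum_le_sum hE).trans_eq (by rw [sum_const, nsmul_eq_mul, mul_comm])
  have hlower := card_mul_sq_div_sub_le_sum_card_filter hχ hB hS E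
  refine le_of_mul_le_mul_right ?_ (show (0 : ℝ) < E.card by exact_mod_cast hne.card_pos)
  linarith [show S.card * (E.card : ℝ) / (Fintype.card F : ℝ) ^ d * E.card
    = S.card * (E.card : ℝ) ^ 2 / (Fintype.card F : ℝ) ^ d by ring]

end Fourier

theorem rpow_mul_le_of_card_bounds {q D K A L s t M : ℝ} (hq : 0 < q) (hK : 0 < K)
    (hA : 0 ≤ A) (hL : 0 ≤ L) (hs : K / 2 * q ^ (D - 1) ≤ s)
    (ht : 4 * (A + 1) / K * q ^ ((D + 1) / 2) * L ≤ 2 * t)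
    (h : s * t / q ^ D ≤ M + A * q ^ (-((D + 1) / 2)) * L * q ^ D) :
    q ^ ((D - 1) / 2) * L ≤ M := by
  have hmain : q ^ (D - 1) * q ^ ((D + 1) / 2) / q ^ D = q ^ ((D - 1) / 2) := by
    rw [← Real.rpow_add hq, ← Real.rpow_sub hq]; ring_nf
  have herror : q ^ (-((D + 1) / 2)) * q ^ D = q ^ ((D - 1) / 2) := by
    rw [← Real.rpow_add hq]; ring_nf
  have : (A + 1) * (q ^ ((D - 1) / 2) * L) ≤ M + A * (q ^ ((D - 1) / 2) * L) :=
    calc (A + 1) * (q ^ ((D - 1) / 2) * L)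
        = K / 4 * q ^ (D - 1) * (4 * (A + 1) / K * q ^ ((D + 1) / 2) * L) / q ^ D := by
          rw [← hmain]; field_simp
      _ ≤ K / 4 * q ^ (D - 1) * (2 * t) / q ^ D := by gcongr
      _ = K / 2 * q ^ (D - 1) * t / q ^ D := by ring
      _ ≤ s * t / q ^ D := by
          have : 0 ≤ 4 * (A + 1) / K * q ^ ((D + 1) / 2) * L := by positivity
          gcongr
          linarith
      _ ≤ M + A * (q ^ ((D - 1) / 2) * L) := h.trans_eq (by rw [← herror]; ring)
  linarith

theorem half_mul_rpow_le_of_abs_sub_le {q s K C₀ D α : ℝ} (hq : 0 < q)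
    (hs : |s - K * q ^ D| ≤ C₀ * q ^ (D - α)) (hC₀ : C₀ * q ^ (-α) ≤ K / 2) :
    K / 2 * q ^ D ≤ s := by
  have hdecay : C₀ * q ^ (D - α) ≤ K / 2 * q ^ D := by
    rw [sub_eq_add_neg, Real.rpow_add hq, mul_left_comm, mul_comm (K / 2)]
    exact mul_le_mul_of_nonneg_left hC₀ (by positivity)
  linarith [(abs_le.mp hs).1]

theorem eventually_one_lt_and_one_le_log_and_mul_rpow_neg_le {α ε : ℝ} (hα : 0 < α)
    (hε : 0 < ε) (C : ℝ) :
    ∀ᶠ n : ℕ in Filter.atTop, 1 < (n : ℝ) ∧ 1 ≤ Real.log n ∧ C * (n : ℝ) ^ (-α) ≤ ε := by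
  have hn := tendsto_natCast_atTop_atTop (R := ℝ)
  have hdecay := ((tendsto_rpow_neg_atTop hα).comp hn).const_mul C
  rw [mul_zero] at hdecay
  exact (hn.eventually_gt_atTop 1).and <|
    ((Real.tendsto_log_atTop.comp hn).eventually_ge_atTop 1).and
      (hdecay.eventually (ge_mem_nhds hε))

theorem card_filter_sub_mem_le_of_mem_filter_not_lt {V : Type*} [Sub V] [DecidableEq V]
    {E S : Finset V} {M : ℝ} {x : V}
    (hx : x ∈ E.filter fun x => ¬ M < #(E.filter fun y => x - y ∈ S)) :
    (#((E.filter fun x => ¬ M < #(E.filter fun y => x - y ∈ S)).filter fun y => x - y ∈ S) : ℝ)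
      ≤ M :=
  (Nat.cast_le.mpr (card_le_card (filter_subset_filter _ (filter_subset _ _)))).trans
    (not_lt.mp (mem_filter.mp hx).2)

theorem pruning_lemma_general
    (K C₀ A γ : ℝ) (hK : 0 < K) (hA : 0 < A) (hγ : 0 ≤ γ)
    (d : ℕ) (α β : ℝ)
    (hα : ((d : ℝ) - 1) / 2 < α) (hβ0 : 0 ≤ β) (hβ : β < ((d : ℝ) - 1) / 2) :
    ∃ c c' : ℝ, 0 < c ∧ 0 < c' ∧ ∃ Q : ℕ,
      ∀ (F : Type) [Field F] [Fintype F] [DecidableEq F],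
        Q ≤ Fintype.card F →
        ∀ χ : AddChar F ℂ, χ ≠ 1 →
        ∀ S : Finset (Fin d → F),
          (∀ m : Fin d → F, m ≠ 0 →
            ‖ftr χ S m‖ ≤
              A * (Fintype.card F : ℝ) ^ (-(((d : ℝ) + 1) / 2)) *
                Real.log (Fintype.card F) ^ γ) →
          |(S.card : ℝ) - K * (Fintype.card F : ℝ) ^ ((d : ℝ) - 1)| ≤
            C₀ * (Fintype.card F : ℝ) ^ ((d : ℝ) - 1 - α) →
          ∀ E : Finset (Fin d → F),
            c * (Fintype.card F : ℝ) ^ (((d : ℝ) + 1) / 2) *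
                Real.log (Fintype.card F) ^ γ ≤ (E.card : ℝ) →
            ∀ M : ℝ, 0 < M → M ≤ (Fintype.card F : ℝ) ^ β →
              ∃ EM : Finset (Fin d → F), EM ⊆ E ∧
                (∀ x, x ∈ EM ↔ x ∈ E ∧
                  M < ((E.filter (fun y => x - y ∈ S)).card : ℝ)) ∧
                c' * (E.card : ℝ) ≤ (EM.card : ℝ) := by
  obtain ⟨Q, hQ⟩ := Filter.eventually_atTop.mp <|
    eventually_one_lt_and_one_le_log_and_mul_rpow_neg_le (α := α) (by linarith)
      (by positivity : 0 < K / 2) C₀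
  refine ⟨4 * (A + 1) / K, 1 / 2, by positivity, by norm_num, Q, ?_⟩
  intro F _ _ _ hQF χ hχ S hS hScard E hE M hM hMβ
  obtain ⟨hq, hlog, hC₀⟩ := hQ _ hQF
  refine ⟨E.filter fun x => M < #(E.filter fun y => x - y ∈ S), filter_subset _ _,
    fun x => mem_filter, ?_⟩
  by_contra! hsmall
  set E' := E.filter fun x => ¬ M < #(E.filter fun y => x - y ∈ S)
  have hE' : (E.card : ℝ) ≤ 2 * E'.card := by
    have : (#(E.filter fun x => M < #(E.filter fun y => x - y ∈ S)) : ℝ) + E'.card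
        = E.card := by exact_mod_cast card_filter_add_card_filter_not _
    linarith
  have hq0 : (0 : ℝ) < Fintype.card F := by linarith
  have hcount := card_mul_card_div_le_of_forall_card_filter_le (E := E') hχ (by positivity) hS
    hM.le fun _ => card_filter_sub_mem_le_of_mem_filter_not_lt
  rw [← Real.rpow_natCast] at hcount
  have hthreshold := rpow_mul_le_of_card_bounds hq0 hK hA.le (by positivity)
    (half_mul_rpow_le_of_abs_sub_le hq0 hScard hC₀) (hE.trans hE') hcount
  have hL : (Fintype.card F : ℝ) ^ (((d : ℝ) - 1) / 2)
      ≤ (Fintype.card F : ℝ) ^ (((d : ℝ) - 1) / 2) * Real.log (Fintype.card F) ^ γ :=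
    le_mul_of_one_le_right (by positivity) (Real.one_le_rpow hlog hγ)
  linarith [Real.rpow_lt_rpow_of_exponent_lt hq hβ]

/-- pruning: for each `0 < M ≤ q^β`, the set `E_M` of points of `E`
with more than `M` `S`-neighbours in `E` has `|E_M| ≥ c'|E|`. -/
theorem pruning_lemma
    (K C₀ A γ : ℝ) (hK : 0 < K) (hC₀ : 0 < C₀) (hA : 0 < A) (hγ : 0 ≤ γ)
    (d : ℕ) (hd : 2 ≤ d) (α β : ℝ)
    (hα : ((d : ℝ) - 1) / 2 < α) (hβ0 : 0 ≤ β) (hβ : β < ((d : ℝ) - 1) / 2) :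
    ∃ c c' : ℝ, 0 < c ∧ 0 < c' ∧ ∃ Q : ℕ,
      ∀ (F : Type) [Field F] [Fintype F] [DecidableEq F],
        Q ≤ Fintype.card F →
        ∀ χ : AddChar F ℂ, χ ≠ 1 →
        ∀ S : Finset (Fin d → F),
          (∀ m : Fin d → F, m ≠ 0 →
            ‖ftr χ S m‖ ≤
              A * (Fintype.card F : ℝ) ^ (-(((d : ℝ) + 1) / 2)) *
                Real.log (Fintype.card F) ^ γ) →
          |(S.card : ℝ) - K * (Fintype.card F : ℝ) ^ ((d : ℝ) - 1)| ≤
            C₀ * (Fintype.card F : ℝ) ^ ((d : ℝ) - 1 - α) →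
          ∀ E : Finset (Fin d → F),
            c * (Fintype.card F : ℝ) ^ (((d : ℝ) + 1) / 2) *
                Real.log (Fintype.card F) ^ γ ≤ (E.card : ℝ) →
            ∀ M : ℝ, 0 < M → M ≤ (Fintype.card F : ℝ) ^ β →
              ∃ EM : Finset (Fin d → F), EM ⊆ E ∧
                (∀ x, x ∈ EM ↔ x ∈ E ∧
                  M < ((E.filter (fun y => x - y ∈ S)).card : ℝ)) ∧
                c' * (E.card : ℝ) ≤ (EM.card : ℝ) :=
  pruning_lemma_general K C₀ A γ hK hA hγ d α β hα hβ0 hβ
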